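/- arXiv:2409.11248 — 3 statements merged into one kernel-verified Lean document; each statement's English description precedes it below -/
import Mathlib

section
/- Let α be a type, cl : Set α → Set α a closure operator, and R a ternary relation on sets of α satisfying: (a) symmetry (R A C B → R B C A), (b) monotonicity in the right argument (R A C B and B' ⊆ B imply R A C B'), and (c) transitivity: for all C ⊆ B ⊆ D, if R A C B and R A B D then R A C D. Define R⁺ A C B ↔ R (cl (A ∪ C)) (cl C) (cl (B ∪ C)). Then R⁺ is transitive: for all sets C ⊆ B ⊆ D, if R⁺ A C B and R⁺ A B D then R⁺ A C D. -/
/-- If `R` is symmetric, right-monotone and transitive, then the induced relation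
`R⁺ A C B ↔ R (cl (A ∪ C)) (cl C) (cl (B ∪ C))` is transitive. -/
theorem induced_relation_transitive {α : Type*} (cl : Set α → Set α)
    (hmono : ∀ X Y : Set α, X ⊆ Y → cl X ⊆ cl Y)
    (hext : ∀ X : Set α, X ⊆ cl X)
    (hidem : ∀ X : Set α, cl (cl X) = cl X)
    (R : Set α → Set α → Set α → Prop)
    (hsym : ∀ A C B : Set α, R A C B → R B C A)
    (hmonoR : ∀ A C B B' : Set α, R A C B → B' ⊆ B → R A C B')
    (htrans : ∀ A C B D : Set α, C ⊆ B → B ⊆ D → R A C B → R A B D → R A C D) :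
    ∀ A C B D : Set α, C ⊆ B → B ⊆ D →
      R (cl (A ∪ C)) (cl C) (cl (B ∪ C)) →
      R (cl (A ∪ B)) (cl B) (cl (D ∪ B)) →
      R (cl (A ∪ C)) (cl C) (cl (D ∪ C)) := by
  intro A C B D hCB hBD h1 h2
  have eBC : B ∪ C = B := Set.union_eq_self_of_subset_right hCB
  have eDB : D ∪ B = D := Set.union_eq_self_of_subset_right hBD
  have eDC : D ∪ C = D := Set.union_eq_self_of_subset_right (hCB.trans hBD)
  rw [eBC] at h1
  rw [eDB] at h2
  rw [eDC]
  -- R (cl (A∪C)) (cl B) (cl D) from h2 by symmetry + right monotonicity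
  have hAC_AB : cl (A ∪ C) ⊆ cl (A ∪ B) :=
    hmono _ _ (Set.union_subset_union_right A hCB)
  have h2' : R (cl (A ∪ C)) (cl B) (cl D) :=
    hsym _ _ _ (hmonoR _ _ _ _ (hsym _ _ _ h2) hAC_AB)
  exact htrans _ _ _ _ (hmono _ _ hCB) (hmono _ _ hBD) h1 h2'
end

section
/- Let α be a type, cl : Set α → Set α a closure operator that is finitary (for every x ∈ cl A there is a finite A₀ ⊆ A with x ∈ cl A₀), and R a ternary relation on sets of α that is symmetric, monotone in both outer arguments (shrinking either outer argument preserves R), and has finite character: if R A₀ C B for every finite A₀ ⊆ A then R A C B. Define R⁺ A C B ↔ R (cl (A ∪ C)) (cl C) (cl (B ∪ C)). Then R⁺ has finite character: if R⁺ A₀ C B for every finite A₀ ⊆ A, then R⁺ A C B. -/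
/-- If `cl` is a finitary closure operator and `R` is symmetric, monotone in both outer
arguments and has finite character, then the induced relation
`R⁺ A C B ↔ R (cl (A ∪ C)) (cl C) (cl (B ∪ C))` has finite character. -/
theorem induced_relation_finite_character {α : Type*} (cl : Set α → Set α)
    (hmono : ∀ X Y : Set α, X ⊆ Y → cl X ⊆ cl Y)
    (hext : ∀ X : Set α, X ⊆ cl X)
    (hidem : ∀ X : Set α, cl (cl X) = cl X)
    (hfin : ∀ (A : Set α) (x : α), x ∈ cl A → ∃ A₀ : Set α, A₀ ⊆ A ∧ A₀.Finite ∧ x ∈ cl A₀)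
    (R : Set α → Set α → Set α → Prop)
    (hsym : ∀ A C B : Set α, R A C B → R B C A)
    (hmonoR : ∀ A C B B' : Set α, R A C B → B' ⊆ B → R A C B')
    (hmonoL : ∀ A A' C B : Set α, R A C B → A' ⊆ A → R A' C B)
    (hfc : ∀ A C B : Set α, (∀ A₀ : Set α, A₀ ⊆ A → A₀.Finite → R A₀ C B) → R A C B) :
    ∀ A C B : Set α,
      (∀ A₀ : Set α, A₀ ⊆ A → A₀.Finite → R (cl (A₀ ∪ C)) (cl C) (cl (B ∪ C))) →
      R (cl (A ∪ C)) (cl C) (cl (B ∪ C)) := by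
  intro A C B h
  apply hfc
  intro X hX hXfin
  -- for each x in X, pick finite S x ⊆ A ∪ C with x ∈ cl (S x)
  have hchoice : ∀ x ∈ X, ∃ S : Set α, S ⊆ A ∪ C ∧ S.Finite ∧ x ∈ cl S := by
    intro x hx
    exact hfin _ x (hX hx)
  choose! S hS1 hS2 hS3 using hchoice
  set T : Set α := ⋃ x ∈ X, S x with hT
  have hTfin : T.Finite := hXfin.biUnion (fun x hx => hS2 x hx)
  have hTsub : T ⊆ A ∪ C := by
    intro t ht
    rcases Set.mem_iUnion₂.1 ht with ⟨x, hx, hxt⟩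
    exact hS1 x hx hxt
  set A₀ : Set α := T ∩ A with hA0
  have hA0fin : A₀.Finite := hTfin.inter_of_left A
  have hA0sub : A₀ ⊆ A := Set.inter_subset_right
  have hTsub' : T ⊆ A₀ ∪ C := by
    intro t ht
    rcases hTsub ht with h1 | h2
    · exact Or.inl ⟨ht, h1⟩
    · exact Or.inr h2
  have hXcl : X ⊆ cl (A₀ ∪ C) := by
    intro x hx
    have : x ∈ cl (S x) := hS3 x hx
    have hsub : S x ⊆ A₀ ∪ C := fun s hs =>
      hTsub' (Set.mem_iUnion₂.2 ⟨x, hx, hs⟩)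
    exact hmono _ _ hsub this
  exact hmonoL _ _ _ _ (h A₀ hA0sub hA0fin) hXcl
end

section
/- Let α be a type, cl : Set α → Set α a closure operator, and R a ternary relation on sets of α that is symmetric, monotone in the right argument, and anti-reflexive with respect to cl: for any element a and set D, if R {a} D {a} then a ∈ cl D. Define R⁺ A C B ↔ R (cl (A ∪ C)) (cl C) (cl (B ∪ C)). Then R⁺ is anti-reflexive: for any element a and set C, if R⁺ {a} C {a} then a ∈ cl C. -/
/-- If `R` is symmetric, right-monotone and anti-reflexive with respect to `cl`,
then the induced relation `R⁺ A C B ↔ R (cl (A ∪ C)) (cl C) (cl (B ∪ C))` is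
anti-reflexive. -/
theorem induced_relation_anti_reflexive {α : Type*} (cl : Set α → Set α)
    (hmono : ∀ X Y : Set α, X ⊆ Y → cl X ⊆ cl Y)
    (hext : ∀ X : Set α, X ⊆ cl X)
    (hidem : ∀ X : Set α, cl (cl X) = cl X)
    (R : Set α → Set α → Set α → Prop)
    (hsym : ∀ A C B : Set α, R A C B → R B C A)
    (hmonoR : ∀ A C B B' : Set α, R A C B → B' ⊆ B → R A C B')
    (hanti : ∀ (a : α) (D : Set α), R {a} D {a} → a ∈ cl D) :
    ∀ (a : α) (C : Set α),
      R (cl ({a} ∪ C)) (cl C) (cl ({a} ∪ C)) → a ∈ cl C := by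
  intro a C h
  have hsub : ({a} : Set α) ⊆ cl ({a} ∪ C) :=
    (Set.subset_union_left).trans (hext _)
  have h1 := hmonoR _ _ _ _ h hsub
  have h2 := hmonoR _ _ _ _ (hsym _ _ _ h1) hsub
  have := hanti a (cl C) (hsym _ _ _ h2)
  rwa [hidem] at this
end
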